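/- arXiv:2011.13448 — 3 statements merged into one kernel-verified Lean document; each statement's English description precedes it below -/
import Mathlib

section
/- Suppose in a category C with a distinguished ideal of trivial morphisms, every morphism has a prekernel and a precokernel. Then for any morphism f, precoker(preker(precoker f)) ≅ precoker f. -/
open CategoryTheory

variable {C : Type u} [Category.{v} C]

/-- `k : X ⟶ A` is a `Z`-prekernel of `f : A ⟶ A'`. -/
def IsPrekernel (Z : MorphismProperty C) {X A A' : C} (f : A ⟶ A') (k : X ⟶ A) : Prop :=
  Z (k ≫ f) ∧ ∀ ⦃Y : C⦄ (l : Y ⟶ A), Z (l ≫ f) → ∃! l' : Y ⟶ X, l' ≫ k = l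

/-- `q : A' ⟶ Q` is a `Z`-precokernel of `f : A ⟶ A'`. -/
def IsPrecokernel (Z : MorphismProperty C) {A A' Q : C} (f : A ⟶ A') (q : A' ⟶ Q) : Prop :=
  Z (f ≫ q) ∧ ∀ ⦃B : C⦄ (g : A' ⟶ B), Z (f ≫ g) → ∃! h : Q ⟶ B, q ≫ h = g

/-- `precoker (preker (precoker f)) ≅ precoker f`. -/
theorem stmt_9 (Z : MorphismProperty C)
    (hpre : ∀ ⦃X Y W : C⦄ (f : X ⟶ Y) (h : W ⟶ X), Z f → Z (h ≫ f))
    (hpost : ∀ ⦃X Y W : C⦄ (f : X ⟶ Y) (g : Y ⟶ W), Z f → Z (f ≫ g))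
    (hker : ∀ ⦃A A' : C⦄ (f : A ⟶ A'), ∃ (X : C) (k : X ⟶ A), IsPrekernel Z f k)
    (hcoker : ∀ ⦃A A' : C⦄ (f : A ⟶ A'), ∃ (Q : C) (q : A' ⟶ Q), IsPrecokernel Z f q)
    {A A' Q X Q₂ : C} (f : A ⟶ A')
    (q : A' ⟶ Q) (hq : IsPrecokernel Z f q)
    (k : X ⟶ A') (hk : IsPrekernel Z q k)
    (q₂ : A' ⟶ Q₂) (hq₂ : IsPrecokernel Z k q₂) :
    ∃ e : Q ≅ Q₂, q ≫ e.hom = q₂ := by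
  -- f factors through k
  obtain ⟨f', hf'⟩ := (hk.2 f hq.1).exists
  have hfq₂ : Z (f ≫ q₂) := by
    rw [← hf', Category.assoc]; exact hpre _ _ hq₂.1
  obtain ⟨h, hh, hhu⟩ := hq.2 q₂ hfq₂
  obtain ⟨g, hg, hgu⟩ := hq₂.2 q hk.1
  refine ⟨⟨h, g, ?_, ?_⟩, hh⟩
  · obtain ⟨u, _, hu⟩ := hq.2 q hq.1
    have h1 := hu (h ≫ g) (by simp [reassoc_of% hh, hg])
    have h2 := hu (𝟙 Q) (Category.comp_id q)
    simp [h1, h2]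
  · obtain ⟨u, _, hu⟩ := hq₂.2 q₂ hq₂.1
    have h1 := hu (g ≫ h) (by simp [reassoc_of% hg, hh])
    have h2 := hu (𝟙 Q₂) (Category.comp_id q₂)
    simp [h1, h2]
end

section
/- Short preexact sequences placing an object between a torsion and torsion-free part are unique up to isomorphism: given a pretorsion theory (T, F) on a category C, if A → B → C and A' → B → C' are both short Z-preexact sequences with A, A' ∈ T and C, C' ∈ F, then there exist isomorphisms A ≅ A' and C ≅ C' making the evident triangles commute. -/
open CategoryTheory

variable {C : Type u} [Category.{v} C]

/-- A morphism is `Z`-trivial (w.r.t. subcategories `T`, `F`) if it factors through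
an object lying in both `T` and `F`. -/
def ZTriv (T F : C → Prop) : MorphismProperty C :=
  fun X Y f => ∃ (W : C) (g : X ⟶ W) (h : W ⟶ Y), T W ∧ F W ∧ g ≫ h = f

/-- in a pretorsion theory `(T, F)`, two short `Z`-preexact sequences
`A ⟶ B ⟶ C` and `A' ⟶ B ⟶ C'` with torsion left parts and torsion-free right parts
are isomorphic via isomorphisms making the evident triangles commute. -/
theorem stmt_10 (T F : C → Prop)
    (hTF : ∀ ⦃X Y : C⦄, T X → F Y → ∀ f : X ⟶ Y, ZTriv T F f)
    {A A' B Cc C' : C}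
    (f : A ⟶ B) (g : B ⟶ Cc) (f' : A' ⟶ B) (g' : B ⟶ C')
    (hA : T A) (hC : F Cc) (hA' : T A') (hC' : F C')
    (h1 : IsPrekernel (ZTriv T F) g f) (h2 : IsPrecokernel (ZTriv T F) f g)
    (h1' : IsPrekernel (ZTriv T F) g' f') (h2' : IsPrecokernel (ZTriv T F) f' g') :
    ∃ (u : A ≅ A') (v : Cc ≅ C'), u.hom ≫ f' = f ∧ g ≫ v.hom = g' := by
  obtain ⟨u, hu, _⟩ := h1'.2 f (hTF hA hC' (f ≫ g'))
  obtain ⟨u', hu', _⟩ := h1.2 f' (hTF hA' hC (f' ≫ g))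
  obtain ⟨v, hv, _⟩ := h2.2 g' (hTF hA hC' (f ≫ g'))
  obtain ⟨v', hv', _⟩ := h2'.2 g (hTF hA' hC (f' ≫ g))
  have huu' : u ≫ u' = 𝟙 A := by
    obtain ⟨_, _, huniq⟩ := h1.2 f h1.1
    exact (huniq _ (show (u ≫ u') ≫ f = f by rw [Category.assoc, hu', hu])).trans (huniq _ (by simp)).symm
  have hu'u : u' ≫ u = 𝟙 A' := by
    obtain ⟨_, _, huniq⟩ := h1'.2 f' h1'.1
    exact (huniq _ (show (u' ≫ u) ≫ f' = f' by rw [Category.assoc, hu, hu'])).trans (huniq _ (by simp)).symm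
  have hvv' : v ≫ v' = 𝟙 Cc := by
    obtain ⟨_, _, huniq⟩ := h2.2 g h2.1
    exact (huniq _ (show g ≫ v ≫ v' = g by rw [← Category.assoc, hv, hv'])).trans (huniq _ (by simp)).symm
  have hv'v : v' ≫ v = 𝟙 C' := by
    obtain ⟨_, _, huniq⟩ := h2'.2 g' h2'.1
    exact (huniq _ (show g' ≫ v' ≫ v = g' by rw [← Category.assoc, hv', hv])).trans (huniq _ (by simp)).symm
  exact ⟨⟨u, u', huu', hu'u⟩, ⟨v, v', hvv', hv'v⟩, hu, hv⟩
end

section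
/- Let A' be any small category, A the wide symmetric subcategory of morphisms f : X → Y of A' with Hom_{A'}(Y,X) ≠ ∅, and F : A → A' the inclusion. Then F is a prekernel of any precokernel q : A' → Q of F, where prekernels and precokernels are taken with respect to the ideal of trivial functors. -/
open CategoryTheory

/-- A functor is trivial if objects connected by a morphism have equal images. -/
def TrivialFunctor {A B : Type u} [SmallCategory A] [SmallCategory B] (F : A ⥤ B) : Prop :=
  ∀ X Y : A, Nonempty (X ⟶ Y) → F.obj X = F.obj Y

/-- `K : X ⥤ A` is a prekernel of `F : A ⥤ A'` (w.r.t. the ideal of trivial functors). -/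
def IsFunctorPrekernel {X A A' : Type u} [SmallCategory X] [SmallCategory A]
    [SmallCategory A'] (F : A ⥤ A') (K : X ⥤ A) : Prop :=
  TrivialFunctor (K ⋙ F) ∧
    ∀ (Y : Type u) (_ : SmallCategory Y) (Λ : Y ⥤ A),
      TrivialFunctor (Λ ⋙ F) → ∃! Λ' : Y ⥤ X, Λ' ⋙ K = Λ

/-- `q : A' ⥤ Q` is a precokernel of `F : A ⥤ A'` (w.r.t. the ideal of trivial functors). -/
def IsFunctorPrecokernel {A A' Q : Type u} [SmallCategory A] [SmallCategory A']
    [SmallCategory Q] (F : A ⥤ A') (q : A' ⥤ Q) : Prop :=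
  TrivialFunctor (F ⋙ q) ∧
    ∀ (B : Type u) (_ : SmallCategory B) (g : A' ⥤ B),
      TrivialFunctor (F ⋙ g) → ∃! h : Q ⥤ B, q ⋙ h = g

/-- The wide subcategory of `A'` whose morphisms `f : X ⟶ Y` are those with
`Hom_{A'}(Y,X)` (and hence `Hom_{A'}(X,Y)`) nonempty. -/
structure SymSub (A' : Type u) [SmallCategory A'] : Type u where
  as : A'

instance {A' : Type u} [SmallCategory A'] : SmallCategory (SymSub A') where
  Hom X Y := { _f : X.as ⟶ Y.as // Nonempty (Y.as ⟶ X.as) }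
  id X := ⟨𝟙 X.as, ⟨𝟙 X.as⟩⟩
  comp f g := ⟨f.1 ≫ g.1, ⟨g.2.some ≫ f.2.some⟩⟩
  id_comp f := Subtype.ext (Category.id_comp f.1)
  comp_id f := Subtype.ext (Category.comp_id f.1)
  assoc f g h := Subtype.ext (Category.assoc f.1 g.1 h.1)

/-- The inclusion functor of the wide symmetric subcategory. -/
def symInclusion (A' : Type u) [SmallCategory A'] : SymSub A' ⥤ A' where
  obj X := X.as
  map f := f.1

/-- The equivalence relation: connected by morphisms in both directions. -/
def symSetoid (A' : Type u) [SmallCategory A'] : Setoid A' where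
  r X Y := Nonempty (X ⟶ Y) ∧ Nonempty (Y ⟶ X)
  iseqv := ⟨fun X => ⟨⟨𝟙 X⟩, ⟨𝟙 X⟩⟩,
    fun h => ⟨h.2, h.1⟩,
    fun h h' => ⟨⟨h.1.some ≫ h'.1.some⟩, ⟨h'.2.some ≫ h.2.some⟩⟩⟩

instance symQuotPreorder (A' : Type u) [SmallCategory A'] :
    Preorder (Quotient (symSetoid A')) where
  le x y := Quotient.liftOn₂ x y (fun X Y => Nonempty (X ⟶ Y))
    (fun a b a' b' ha hb => propext ⟨fun ⟨f⟩ => ⟨ha.2.some ≫ f ≫ hb.1.some⟩,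
      fun ⟨f⟩ => ⟨ha.1.some ≫ f ≫ hb.2.some⟩⟩)
  le_refl x := Quotient.inductionOn x fun X => ⟨𝟙 X⟩
  le_trans x y z := Quotient.inductionOn₃ x y z
    fun X Y Z (h : Nonempty (X ⟶ Y)) (h' : Nonempty (Y ⟶ Z)) =>
      (⟨h.some ≫ h'.some⟩ : Nonempty (X ⟶ Z))

/-- Quotient functor to the preorder of ζ-classes. -/
def symQuotFunctor (A' : Type u) [SmallCategory A'] :
    A' ⥤ Quotient (symSetoid A') where
  obj X := Quotient.mk _ X
  map {X Y} f := homOfLE (⟨f⟩ : Nonempty (X ⟶ Y))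
  map_id _ := rfl
  map_comp _ _ := rfl

theorem symQuot_trivial (A' : Type u) [SmallCategory A'] :
    TrivialFunctor (symInclusion A' ⋙ symQuotFunctor A') := by
  intro X Y ⟨f⟩
  exact Quotient.sound ⟨⟨f.1⟩, f.2⟩

theorem q_eq_connects {A' Q : Type u} [SmallCategory A'] [SmallCategory Q]
    (q : A' ⥤ Q) (hq : IsFunctorPrecokernel (symInclusion A') q)
    {X Y : A'} (h : q.obj X = q.obj Y) : (symSetoid A').r X Y := by
  obtain ⟨h', hh', -⟩ := hq.2 _ _ (symQuotFunctor A') (symQuot_trivial A')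
  have hX : (symQuotFunctor A').obj X = (symQuotFunctor A').obj Y := by
    rw [← hh']
    exact congrArg h'.obj h
  exact Quotient.exact hX

theorem symSub_eqToHom_fst {A' : Type u} [SmallCategory A'] {X Y : SymSub A'}
    (h : X = Y) : (eqToHom h).1 = eqToHom (congrArg SymSub.as h) := by
  subst h; rfl

/-- the inclusion `F : A ⥤ A'` of the wide symmetric subcategory is a
prekernel of any precokernel `q : A' ⥤ Q` of `F`. -/
theorem stmt_19 {A' Q : Type u} [SmallCategory A'] [SmallCategory Q]
    (q : A' ⥤ Q) (hq : IsFunctorPrecokernel (symInclusion A') q) :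
    IsFunctorPrekernel q (symInclusion A') := by
  constructor
  · exact hq.1
  · intro Y _ Λ hΛ
    refine ⟨{ obj := fun y => ⟨Λ.obj y⟩
              map := fun {y z} f => ⟨Λ.map f,
                (q_eq_connects q hq (hΛ y z ⟨f⟩)).2⟩
              map_id := fun y => Subtype.ext (Λ.map_id y)
              map_comp := fun f g => Subtype.ext (Λ.map_comp f g) }, ?_, ?_⟩
    · rfl
    · intro Λ'' h''
      have hobj : ∀ y, Λ''.obj y =
          (⟨Λ.obj y⟩ : SymSub A') := by
        intro y
        have := Functor.congr_obj h'' y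
        cases hh : Λ''.obj y
        simp only [Functor.comp_obj, symInclusion, hh] at this ⊢
        rw [this]
      refine CategoryTheory.Functor.ext hobj ?_
      intro y z f
      apply Subtype.ext
      have := Functor.congr_hom h'' f
      simp only [Functor.comp_map, symInclusion] at this
      show (Λ''.map f).1 = (eqToHom (hobj y)).1 ≫ Λ.map f ≫ (eqToHom (hobj z).symm).1
      rw [symSub_eqToHom_fst, symSub_eqToHom_fst, this]
end
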